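/- arXiv:1006.0686 — 9 statements merged into one kernel-verified Lean document; each statement's English description precedes it below -/
import Mathlib

section
/- For all integers n ≥ 1 and 0 ≤ k ≤ n, the binomial identity (1/(n+1)) * (C(n+k+1, k+1)*C(n-1, k) + C(n+k, k)*C(n-1, k-1)) = C(n+k, n-k)*C(2k, k)/(k+1) holds, where C(a,b) denotes the binomial coefficient. -/
lemma fact_ne (m : ℕ) : ((m.factorial : ℚ)) ≠ 0 :=
  Nat.cast_ne_zero.mpr (Nat.factorial_ne_zero _)

lemma aux (j e : ℕ) :
    (1 / ((j : ℚ) + e + 3)) *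
      ((Nat.choose (2*j+e+4) (j+2) * Nat.choose (j+e+1) (j+1) : ℚ) +
        (Nat.choose (2*j+e+3) (j+1) * Nat.choose (j+e+1) j : ℚ)) =
    (Nat.choose (2*j+e+3) (e+1) * Nat.choose (2*j+2) (j+1) : ℚ) / ((j : ℚ) + 2) := by
  have h1 : j+2 ≤ 2*j+e+4 := by omega
  have h2 : j+1 ≤ j+e+1 := by omega
  have h3 : j+1 ≤ 2*j+e+3 := by omega
  have h4 : j ≤ j+e+1 := by omega
  have h5 : e+1 ≤ 2*j+e+3 := by omega
  have h6 : j+1 ≤ 2*j+2 := by omega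
  rw [Nat.cast_choose ℚ h1, Nat.cast_choose ℚ h2, Nat.cast_choose ℚ h3,
      Nat.cast_choose ℚ h4, Nat.cast_choose ℚ h5, Nat.cast_choose ℚ h6]
  have e1 : 2*j+e+4 - (j+2) = j+e+2 := by omega
  have e2 : j+e+1 - (j+1) = e := by omega
  have e3 : 2*j+e+3 - (j+1) = j+e+2 := by omega
  have e4 : j+e+1 - j = e+1 := by omega
  have e5 : 2*j+e+3 - (e+1) = 2*j+2 := by omega
  have e6 : 2*j+2 - (j+1) = j+1 := by omega
  rw [e1, e2, e3, e4, e5, e6]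
  have f1 : ((2*j+e+4).factorial : ℚ) = (2*(j:ℚ)+e+4) * (2*j+e+3).factorial := by
    rw [show 2*j+e+4 = (2*j+e+3)+1 by omega, Nat.factorial_succ]; push_cast; ring
  have f2 : ((j+e+2).factorial : ℚ) = ((j:ℚ)+e+2) * (j+e+1).factorial := by
    rw [show j+e+2 = (j+e+1)+1 by omega, Nat.factorial_succ]; push_cast; ring
  have f3 : ((j+2).factorial : ℚ) = ((j:ℚ)+2) * ((j:ℚ)+1) * j.factorial := by
    rw [show j+2 = (j+1)+1 by omega, Nat.factorial_succ, Nat.factorial_succ]; push_cast; ring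
  have f4 : ((j+1).factorial : ℚ) = ((j:ℚ)+1) * j.factorial := by
    rw [Nat.factorial_succ]; push_cast; ring
  have f5 : ((e+1).factorial : ℚ) = ((e:ℚ)+1) * e.factorial := by
    rw [Nat.factorial_succ]; push_cast; ring
  rw [f1, f2, f3, f4, f5]
  have n1 := fact_ne (2*j+e+3)
  have n2 := fact_ne (j+e+1)
  have n3 := fact_ne j
  have n4 := fact_ne e
  have n5 := fact_ne (2*j+2)
  have p1 : ((j:ℚ)+e+3) ≠ 0 := by positivity
  have p2 : ((j:ℚ)+2) ≠ 0 := by positivity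
  have p3 : ((j:ℚ)+1) ≠ 0 := by positivity
  have p4 : ((e:ℚ)+1) ≠ 0 := by positivity
  have p5 : ((j:ℚ)+e+2) ≠ 0 := by positivity
  field_simp
  ring

/-- Binomial identity: for n ≥ 1 and 0 ≤ k ≤ n,
(1/(n+1)) * (C(n+k+1,k+1)*C(n-1,k) + C(n+k,k)*C(n-1,k-1)) = C(n+k,n-k)*C(2k,k)/(k+1),
with the convention C(n-1,-1) = 0 (the k = 0 case of the second term). -/
theorem stmt0 (n k : ℕ) (hn : 1 ≤ n) (hk : k ≤ n) :
    (1 / ((n : ℚ) + 1)) *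
      ((Nat.choose (n + k + 1) (k + 1) * Nat.choose (n - 1) k : ℚ) +
        (if k = 0 then 0 else (Nat.choose (n + k) k * Nat.choose (n - 1) (k - 1) : ℚ))) =
    (Nat.choose (n + k) (n - k) * Nat.choose (2 * k) k : ℚ) / ((k : ℚ) + 1) := by
  rcases k with _ | j
  · simp [Nat.choose_one_right, Nat.choose_self]
    field_simp
  · rcases Nat.lt_or_ge (j+1) n with hlt | hge
    · -- n = j + e + 2
      obtain ⟨e, rfl⟩ : ∃ e, n = j + e + 2 := ⟨n - j - 2, by omega⟩
      have := aux j e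
      have h1 : j + e + 2 + (j+1) + 1 = 2*j+e+4 := by omega
      have h2 : j + e + 2 - 1 = j+e+1 := by omega
      have h3 : j + e + 2 + (j+1) = 2*j+e+3 := by omega
      have h4 : j + e + 2 - (j+1) = e+1 := by omega
      have h5 : 2*(j+1) = 2*j+2 := by omega
      have h6 : j + 1 - 1 = j := by omega
      rw [h1, h2, h3, h4, h5, h6] at *
      simp only [Nat.succ_ne_zero, if_false]
      push_cast
      convert this using 2 <;> ring
    · have hn' : n = j + 1 := by omega
      subst hn'
      have z1 : Nat.choose (j+1-1) (j+1) = 0 := Nat.choose_eq_zero_of_lt (by omega)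
      have h4 : j + 1 - (j+1) = 0 := by omega
      have h6 : j + 1 - 1 = j := by omega
      rw [z1, h4, h6]
      simp [Nat.choose_self, Nat.choose_zero_right]
      ring
end

section
/- Let c(y) = (1 − √(1 − 4y))/(2y) for 0 < |y| < 1/4 (extended by c(0)=1), and let Ψ(x) = √(1 − 2(1+2σ)x + x²) for σ > 0. Then for x ≠ 0 near 0, c((1+σ)x/(1+x)²)/(1+x) = 2/(1 + x + Ψ(x)). -/
/-- With c(y) = (1-√(1-4y))/(2y) for y ≠ 0 (c(0) = 1), Ψ(x) = √(1-2(1+2σ)x+x²), σ > 0: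
for x ≠ 0 near 0, c((1+σ)x/(1+x)²)/(1+x) = 2/(1+x+Ψ(x)). -/
theorem stmt6 (σ : ℝ) (hσ : 0 < σ) :
    ∃ ε > 0, ∀ x : ℝ, x ≠ 0 → |x| < ε →
      (let y : ℝ := (1 + σ) * x / (1 + x) ^ 2
       let c : ℝ := if y = 0 then 1 else (1 - Real.sqrt (1 - 4 * y)) / (2 * y)
       c / (1 + x) = 2 / (1 + x + Real.sqrt (1 - 2 * (1 + 2 * σ) * x + x ^ 2))) := by
  have hσ2 : (0:ℝ) < 1 + 2 * σ := by linarith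
  refine ⟨min (1/2) (1 / (4 * (1 + 2 * σ))), by positivity, fun x hx0 hxε => ?_⟩
  have hx1 : |x| < 1/2 := lt_of_lt_of_le hxε (min_le_left _ _)
  have hx2 : |x| < 1 / (4 * (1 + 2 * σ)) := lt_of_lt_of_le hxε (min_le_right _ _)
  have hxa : -(1/2) < x ∧ x < 1/2 := abs_lt.mp hx1
  have hxb : -(1 / (4 * (1 + 2 * σ))) < x ∧ x < 1 / (4 * (1 + 2 * σ)) := abs_lt.mp hx2
  have h1x : (0:ℝ) < 1 + x := by linarith [hxa.1]
  have hq : (0:ℝ) < 1 - 2 * (1 + 2 * σ) * x + x ^ 2 := by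
    rcases hxb with ⟨hl, hr⟩
    have h2 : 2 * (1 + 2 * σ) * x < 1/2 := by
      calc 2 * (1 + 2 * σ) * x ≤ 2 * (1 + 2 * σ) * |x| := by
            have := le_abs_self x
            nlinarith
        _ < 2 * (1 + 2 * σ) * (1 / (4 * (1 + 2 * σ))) := by nlinarith
        _ = 1/2 := by field_simp; ring
    nlinarith [sq_nonneg x]
  intro y c
  have hy : y ≠ 0 := by
    simp only [y]
    have : (1 + σ) * x ≠ 0 := mul_ne_zero (by positivity) hx0
    positivity
  have hc : c = (1 - Real.sqrt (1 - 4 * y)) / (2 * y) := if_neg hy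
  set q : ℝ := 1 - 2 * (1 + 2 * σ) * x + x ^ 2 with hqdef
  have h4y : 1 - 4 * y = q / (1 + x) ^ 2 := by
    simp only [y, hqdef]
    field_simp
    ring
  have hsq : Real.sqrt (1 - 4 * y) = Real.sqrt q / (1 + x) := by
    rw [h4y, Real.sqrt_div hq.le, Real.sqrt_sq h1x.le]
  set s : ℝ := Real.sqrt q with hsdef
  have hs0 : 0 ≤ s := Real.sqrt_nonneg q
  have hs2 : s ^ 2 = q := Real.sq_sqrt hq.le
  have hden : (0:ℝ) < 1 + x + s := by linarith
  rw [hc, hsq]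
  simp only [y]
  rw [div_eq_div_iff (by positivity) (by positivity)]
  have hx0' : x ≠ 0 := hx0
  field_simp
  nlinarith [hs2, sq_nonneg s, hs0]
end

section
/- As formal power series over ℚ, the generating function c(X) of the Catalan numbers satisfies (1/(1−X))·c(σX/(1−X)²) = Σ_{n≥0} (Σ_{k=0}^{n} C(n+k, n−k)·Cat(k)·σ^k)·X^n, i.e., the coefficient of X^n in c(X/(1−X)²) composed appropriately equals Σ_{k=0}^{n} C(n+k, n−k)·Cat(k)·σ^k. -/
/-!
Write `u = 1/(1 - X) = mk 1` and `a = σ X u²`. Since `X^k ∣ a^k`, only the terms `k ≤ n` of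
`c(a)` reach the coefficient of `X^n`, so `[X^n] u · c(a) = Σ_{k ≤ n} Cat(k) [X^n] (u · a^k)`.
Now `u · a^k = σ^k X^k u^(2k+1)` and `[X^m] u^(d+1) = C(d + m, d)`, which gives
`[X^n] (u · a^k) = σ^k C(n + k, 2k) = σ^k C(n + k, n - k)`.
-/

open PowerSeries Finset

namespace PowerSeries

variable {R : Type*} [CommRing R]

theorem invOfUnit_one_sub_X : invOfUnit (1 - X : R⟦X⟧) 1 = mk 1 :=
  calc invOfUnit (1 - X) 1 = mk 1 * (1 - X) * invOfUnit (1 - X : R⟦X⟧) 1 := by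
        rw [mk_one_mul_one_sub_eq_one, one_mul]
    _ = mk 1 := by rw [mul_assoc, mul_invOfUnit _ _ (by simp), mul_one]

theorem coeff_eq_zero_of_lt_of_constantCoeff_eq_zero {a : R⟦X⟧} (ha : constantCoeff a = 0)
    {m k : ℕ} (hmk : m < k) : coeff m (a ^ k) = 0 :=
  X_pow_dvd_iff.mp (pow_dvd_pow_of_dvd (X_dvd_iff.mpr ha) k) m hmk

theorem coeff_mul_mk_sum_coeff_pow (u : R⟦X⟧) {a : R⟦X⟧} (ha : constantCoeff a = 0)
    (c : ℕ → R) (n : ℕ) :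
    coeff n (u * mk fun m => ∑ k ∈ range (m + 1), c k * coeff m (a ^ k)) =
      ∑ k ∈ range (n + 1), c k * coeff n (u * a ^ k) := by
  set f : R⟦X⟧ := mk fun m => ∑ k ∈ range (m + 1), c k * coeff m (a ^ k)
  set g : R⟦X⟧ := ∑ k ∈ range (n + 1), C (c k) * a ^ k
  have htrunc : trunc (n + 1) f = trunc (n + 1) g := by
    ext m
    simp only [coeff_trunc]
    split_ifs with hm
    · simp only [f, g, coeff_mk, map_sum, coeff_C_mul]
      refine sum_subset (range_subset_range.mpr (by omega)) fun k _ hk => ?_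
      rw [coeff_eq_zero_of_lt_of_constantCoeff_eq_zero ha (by simpa using hk), mul_zero]
    · rfl
  rw [coeff_mul_eq_coeff_trunc_mul_trunc _ _ n.lt_succ_self, htrunc,
    ← coeff_mul_eq_coeff_trunc_mul_trunc _ _ n.lt_succ_self]
  simp only [g, mul_sum, map_sum, mul_left_comm u, coeff_C_mul]

theorem coeff_mk_one_mul_pow_C_mul_X_mul_mk_one_sq (s : R) {k n : ℕ} (hkn : k ≤ n) :
    coeff n (mk 1 * (C s * X * mk 1 ^ 2) ^ k) = s ^ k * ((n + k).choose (n - k) : R) := by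
  have hfactor : mk 1 * (C s * X * mk 1 ^ 2) ^ k = C (s ^ k) * (X ^ k * mk 1 ^ (2 * k + 1)) := by
    rw [mul_pow, mul_pow, map_pow, ← pow_mul, pow_succ]
    ring
  obtain ⟨j, rfl⟩ := Nat.exists_eq_add_of_le hkn
  rw [hfactor, coeff_C_mul, add_comm k j, coeff_X_pow_mul, mk_one_pow_eq_mk_choose_add,
    coeff_mk, Nat.add_sub_cancel, Nat.choose_symm_add]
  congr 3
  ring

end PowerSeries

/-- In ℚ[σ][[X]], the formal identity (1/(1-X))·c(σX/(1-X)²)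
= Σ_{n≥0} (Σ_{k=0}^{n} C(n+k, n-k)·Cat(k)·σ^k)·X^n, where c is the Catalan generating
function.  Since a := σX/(1-X)² has zero constant term, the composition c(a) is the
power series whose n-th coefficient is Σ_{k=0}^{n} Cat(k)·(coefficient of X^n in a^k). -/
theorem stmt8 :
    let R := Polynomial ℚ
    let u : PowerSeries R := PowerSeries.invOfUnit (1 - PowerSeries.X) 1
    let a : PowerSeries R := PowerSeries.C Polynomial.X * PowerSeries.X * u ^ 2
    let ca : PowerSeries R := PowerSeries.mk (fun n =>
      ∑ k ∈ Finset.range (n + 1), (catalan k : R) * PowerSeries.coeff n (a ^ k))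
    ∀ n : ℕ, PowerSeries.coeff n (u * ca) =
      ∑ k ∈ Finset.range (n + 1),
        Polynomial.C ((Nat.choose (n + k) (n - k) * catalan k : ℚ)) * Polynomial.X ^ k := by
  intro R u a ca n
  have hu : u = PowerSeries.mk 1 := invOfUnit_one_sub_X
  have ha : constantCoeff a = 0 := by simp [a]
  have ha' : a = C Polynomial.X * X * PowerSeries.mk 1 ^ 2 := by rw [← hu]
  rw [coeff_mul_mk_sum_coeff_pow u ha]
  refine sum_congr rfl fun k hk => ?_
  rw [hu, ha', coeff_mk_one_mul_pow_C_mul_X_mul_mk_one_sq _ (by simpa [Nat.lt_succ_iff] using hk)]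
  simp only [map_mul, map_natCast]
  ring
end

section
/- Define p_n(σ) by p_0(σ) = 1, p_1(σ) = σ, and (n+2)·p_{n+1}(σ) = (2n+1)(1+2σ)·p_n(σ) − (n−1)·p_{n−1}(σ) for n ≥ 1. Then p_n(σ) = Σ_{k=0}^{n} (−1)^{n+k}·C(n+k, n−k)·Cat(k)·(1+σ)^k for all n ≥ 0. -/
/-!
Put `y = -(1 + σ)`, so that `1 + 2σ = -(2y + 1)`. The claim becomes `p_n(σ) = (-1)^n q_n(y)` with
`q_n(y) = Σ_k C(n + k, 2k) Cat(k) y^k`, and the recurrence for `p` turns into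
`(n + 3) q_{n+2} = (2n + 3)(2y + 1) q_{n+1} - n q_n`. Compared coefficientwise, this recurrence
involves four numbers `C(m + j, 2j) Cat(j)`, each a rational multiple of one of them by the
ratio identities for consecutive binomial and Catalan numbers, so it reduces to an identity
between polynomials in `n` and `k`.
-/

open Finset Polynomial

theorem succ_succ_mul_catalan_succ (n : ℕ) :
    (n + 2) * catalan (n + 1) = 2 * (2 * n + 1) * catalan n := by
  have h := Nat.succ_mul_centralBinom_succ n
  rw [← succ_mul_catalan_eq_centralBinom, ← succ_mul_catalan_eq_centralBinom] at h
  refine Nat.eq_of_mul_eq_mul_left n.succ_pos ?_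
  linarith

/-- `C(n + k, 2k)` agrees with `C(n + k, n - k)` for `k ≤ n` but, unlike it, vanishes for `k > n`. -/
noncomputable def catalanChoose (n k : ℕ) : ℚ := ((n + k).choose (2 * k) : ℚ) * catalan k

theorem catalanChoose_zero_right (n : ℕ) : catalanChoose n 0 = 1 := by
  simp [catalanChoose]

theorem catalanChoose_eq_zero_of_lt {n k : ℕ} (h : n < k) : catalanChoose n k = 0 := by
  simp [catalanChoose, Nat.choose_eq_zero_of_lt (by omega : n + k < 2 * k)]

theorem catalanChoose_succ_left (n k : ℕ) :
    ((n : ℚ) + k + 1) * catalanChoose n k = ((n : ℚ) + 1 - k) * catalanChoose (n + 1) k := by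
  rcases le_or_gt k (n + 1) with hk | hk
  · have h := Nat.choose_mul_succ_eq (n + k) (2 * k)
    rw [show n + k + 1 - 2 * k = n + 1 - k by omega] at h
    have h' : ((n + k).choose (2 * k) : ℚ) * (n + k + 1)
        = ((n + k + 1).choose (2 * k)) * (n + 1 - k) := by
      exact_mod_cast congrArg (Nat.cast : ℕ → ℚ) h
    unfold catalanChoose
    rw [show n + 1 + k = n + k + 1 by omega]
    linear_combination (catalan k : ℚ) * h'
  · rw [catalanChoose_eq_zero_of_lt hk, catalanChoose_eq_zero_of_lt (by omega)]; ring

theorem catalanChoose_succ_succ (n k : ℕ) :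
    ((k : ℚ) + 1) * (k + 2) * catalanChoose (n + 1) (k + 1)
      = ((n : ℚ) + k + 1) * (n + k + 2) * catalanChoose n k := by
  have hc : ((k : ℚ) + 2) * catalan (k + 1) = 2 * (2 * k + 1) * catalan k := by
    exact_mod_cast succ_succ_mul_catalan_succ k
  have h1 : ((n + k + 1 : ℕ) : ℚ) * (n + k).choose (2 * k)
      = (n + k + 1).choose (2 * k + 1) * (2 * k + 1) := by
    exact_mod_cast Nat.add_one_mul_choose_eq (n + k) (2 * k)
  have h2 : ((n + k + 2 : ℕ) : ℚ) * (n + k + 1).choose (2 * k + 1)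
      = (n + k + 2).choose (2 * k + 2) * (2 * k + 2) := by
    exact_mod_cast Nat.add_one_mul_choose_eq (n + k + 1) (2 * k + 1)
  unfold catalanChoose
  rw [show n + 1 + (k + 1) = n + k + 2 by omega, show 2 * (k + 1) = 2 * k + 2 by omega]
  push_cast at h1 h2 ⊢
  linear_combination (k + 1) * ((n + k + 2).choose (2 * k + 2) : ℚ) * hc
    - (2 * k + 1) * (catalan k : ℚ) * h2 - (n + k + 2) * (catalan k : ℚ) * h1

theorem catalanChoose_recurrence (n k : ℕ) :
    ((n : ℚ) + 3) * catalanChoose (n + 2) (k + 1)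
      = (2 * n + 3) * (2 * catalanChoose (n + 1) k + catalanChoose (n + 1) (k + 1))
        - n * catalanChoose n (k + 1) := by
  have r1 := catalanChoose_succ_succ (n + 1) k
  have r2 := catalanChoose_succ_left (n + 1) (k + 1)
  have r3 := catalanChoose_succ_left n (k + 1)
  push_cast at r1 r2 r3
  have hP : ((n : ℚ) + k + 2) * (n + k + 3) ≠ 0 := by positivity
  apply mul_left_cancel₀ hP
  linear_combination 2 * (2 * (n : ℚ) + 3) * r1
    + (n * (n - k) - (2 * (n : ℚ) + 3) * (n + k + 2)) * r2 + n * (n + k + 3) * r3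

noncomputable def catalanChoosePoly (n : ℕ) : ℚ[X] :=
  ∑ k ∈ range (n + 1), C (catalanChoose n k) * X ^ k

theorem coeff_catalanChoosePoly (n k : ℕ) : (catalanChoosePoly n).coeff k = catalanChoose n k := by
  simp only [catalanChoosePoly, finsetSum_coeff, coeff_C_mul_X_pow, sum_ite_eq, mem_range]
  split_ifs with hk
  · rfl
  · exact (catalanChoose_eq_zero_of_lt (by omega)).symm

theorem catalanChoosePoly_recurrence (n : ℕ) :
    C ((n : ℚ) + 3) * catalanChoosePoly (n + 2)
      = C (2 * (n : ℚ) + 3) * (2 * X + 1) * catalanChoosePoly (n + 1)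
        - C (n : ℚ) * catalanChoosePoly n := by
  ext k
  rcases k with _ | k
  · simp only [coeff_sub, mul_assoc, add_mul, one_mul, coeff_add, coeff_ofNat_mul, mul_coeff_zero,
      coeff_C_zero, coeff_X_zero, zero_mul, coeff_catalanChoosePoly, catalanChoose_zero_right]
    ring
  · simp only [coeff_sub, coeff_C_mul, mul_assoc, add_mul, one_mul, coeff_add, coeff_ofNat_mul,
      coeff_X_mul, coeff_catalanChoosePoly]
    linear_combination catalanChoose_recurrence n k

theorem neg_one_pow_mul_eval_neg_catalanChoosePoly (n : ℕ) (x : ℚ) :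
    (-1) ^ n * (catalanChoosePoly n).eval (-x)
      = ∑ k ∈ range (n + 1),
          (-1) ^ (n + k) * ((n + k).choose (n - k) : ℚ) * (catalan k : ℚ) * x ^ k := by
  rw [catalanChoosePoly, eval_finsetSum, mul_sum]
  refine sum_congr rfl fun k hk => ?_
  have hkn : k ≤ n := Nat.lt_succ_iff.mp (mem_range.mp hk)
  rw [catalanChoose, Nat.choose_symm_of_eq_add (by omega : n + k = 2 * k + (n - k))]
  simp only [eval_mul, eval_C, eval_pow, eval_X, neg_pow x, pow_add]
  ring

/-- With p_0(σ) = 1, p_1(σ) = σ and (n+2)p_{n+1}(σ) = (2n+1)(1+2σ)p_n(σ) - (n-1)p_{n-1}(σ)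
for n ≥ 1, one has p_n(σ) = Σ_{k=0}^{n} (-1)^{n+k}·C(n+k, n-k)·Cat(k)·(1+σ)^k for all n. -/
theorem stmt9 (p : ℕ → ℚ → ℚ)
    (h0 : ∀ σ : ℚ, p 0 σ = 1) (h1 : ∀ σ : ℚ, p 1 σ = σ)
    (hrec : ∀ n : ℕ, 1 ≤ n → ∀ σ : ℚ,
      ((n : ℚ) + 2) * p (n + 1) σ =
        (2 * (n : ℚ) + 1) * (1 + 2 * σ) * p n σ - ((n : ℚ) - 1) * p (n - 1) σ) :
    ∀ n : ℕ, ∀ σ : ℚ,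
      p n σ = ∑ k ∈ Finset.range (n + 1),
        (-1) ^ (n + k) * (Nat.choose (n + k) (n - k) : ℚ) * (catalan k : ℚ) * (1 + σ) ^ k := by
  intro n σ
  rw [← neg_one_pow_mul_eval_neg_catalanChoosePoly]
  induction n using Nat.twoStepInduction with
  | zero => simp [h0, catalanChoosePoly, catalanChoose_zero_right]
  | one => simp [h1, catalanChoosePoly, sum_range_succ, catalanChoose]
  | more n ihn ihn1 =>
    have hr := hrec (n + 1) (by omega) σ
    have hq := congrArg (eval (-(1 + σ))) (catalanChoosePoly_recurrence n)
    simp only [eval_mul, eval_sub, eval_C, eval_add, eval_X, eval_one, eval_ofNat] at hq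
    rw [Nat.add_sub_cancel, ihn, ihn1] at hr
    have hn : ((n : ℚ) + 3) ≠ 0 := by positivity
    apply mul_left_cancel₀ hn
    push_cast at hr
    linear_combination hr - (-1) ^ n * hq
end

section
/- For every integer n ≥ 1, the identity Σ_{k=0}^{n} C(n+k, n−k)·Cat(k)·1^k evaluated at σ=1 satisfies: twice the n-th little Schröder number equals the n-th large Schröder number; equivalently Σ_{k=0}^{n} C(n+k, n−k)·Cat(k) = 2·Σ_{k=0}^{n} (−1)^{n+k}·C(n+k, n−k)·Cat(k)·2^k for n ≥ 1. -/
/-!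
Put `t(n, k) = C(n+k, 2k) Cat(k)` and `P_σ(n) = ∑ₖ t(n, k) σᵏ`. The relations between neighbouring
terms `t(n, k)` (ratios of factorials) yield the per-term identity
`(m+3) t(m+2, j+1) - (2m+3) t(m+1, j+1) + m t(m, j+1) = 2(2m+3) t(m+1, j)`, and summing it against
`σᵏ` gives `(m+3) P_σ(m+2) = (1+2σ)(2m+3) P_σ(m+1) - m P_σ(m)`. At `σ = 1` and at `σ = -2` the
factor `1+2σ` is `±3`, so `P₁(n)` and `(-1)ⁿ P₋₂(n)` obey the same second-order recurrence; as
`P₁(1), P₁(2) = 2, 6` and `P₋₂(1), P₋₂(2) = -1, 3`, the identity follows for all `n ≥ 1`.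
-/

open Finset

theorem add_two_mul_catalan_succ (k : ℕ) :
    (k + 2) * catalan (k + 1) = 2 * (2 * k + 1) * catalan k := by
  refine Nat.eq_of_mul_eq_mul_left k.succ_pos ?_
  calc (k + 1) * ((k + 2) * catalan (k + 1))
      = (k + 1) * (k + 1).centralBinom := by rw [← succ_mul_catalan_eq_centralBinom]
    _ = 2 * (2 * k + 1) * k.centralBinom := Nat.succ_mul_centralBinom_succ k
    _ = (k + 1) * (2 * (2 * k + 1) * catalan k) := by
      rw [← succ_mul_catalan_eq_centralBinom]; ring

/-- `C(n+k, 2k)` rather than the equal `C(n+k, n-k)`: with truncated subtraction the latter is `1`,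
not `0`, for `k > n`. -/
def schroderTerm (n k : ℕ) : ℚ := (n + k).choose (2 * k) * catalan k

theorem schroderTerm_eq_zero {n k : ℕ} (h : n < k) : schroderTerm n k = 0 := by
  simp [schroderTerm, Nat.choose_eq_zero_of_lt (by omega : n + k < 2 * k)]

@[simp] theorem schroderTerm_zero_right (n : ℕ) : schroderTerm n 0 = 1 := by
  simp [schroderTerm]

theorem schroderTerm_succ_left (n k : ℕ) :
    ((n : ℚ) + 1 - k) * schroderTerm (n + 1) k = (n + k + 1) * schroderTerm n k := by
  rcases le_or_gt k (n + 1) with hk | hk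
  · have h := Nat.choose_mul_succ_eq (n + k) (2 * k)
    rw [show n + k + 1 - 2 * k = n + 1 - k by omega, show n + k + 1 = n + 1 + k by omega] at h
    have hq := congrArg (Nat.cast : ℕ → ℚ) h
    push_cast [Nat.cast_sub hk] at hq
    simp only [schroderTerm]
    linear_combination (-(catalan k : ℚ)) * hq
  · rw [schroderTerm_eq_zero hk, schroderTerm_eq_zero (by omega)]
    ring

theorem schroderTerm_succ_right (n k : ℕ) :
    ((k : ℚ) + 1) * (k + 2) * schroderTerm n (k + 1) =
      (n + k + 1) * (n - k) * schroderTerm n k := by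
  rcases le_or_gt k n with hk | hk
  · obtain ⟨d, rfl⟩ := Nat.exists_eq_add_of_le hk
    have h1 : (((k + d + k + 1) * (k + d + k).choose (2 * k + 1) : ℕ) : ℚ) =
        ((k + d + k + 1).choose (2 * k + 2) * (2 * k + 2) : ℕ) := by
      rw [Nat.add_one_mul_choose_eq]
    have h2 : (((k + d + k).choose (2 * k + 1) * (2 * k + 1) : ℕ) : ℚ) =
        ((k + d + k).choose (2 * k) * d : ℕ) := by
      rw [Nat.choose_succ_right_eq, show k + d + k - 2 * k = d by omega]
    have hc : (((k + 2) * catalan (k + 1) : ℕ) : ℚ) = (2 * (2 * k + 1) * catalan k : ℕ) := by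
      rw [add_two_mul_catalan_succ]
    simp only [schroderTerm]
    rw [show k + d + (k + 1) = k + d + k + 1 by omega, show 2 * (k + 1) = 2 * k + 2 by omega]
    push_cast at h1 h2 hc ⊢
    linear_combination ((k : ℚ) + 1) * ((k + d + k + 1).choose (2 * k + 2) : ℚ) * hc
      - (2 * (k : ℚ) + 1) * (catalan k : ℚ) * h1
      + (2 * (k : ℚ) + d + 1) * (catalan k : ℚ) * h2
  · rw [schroderTerm_eq_zero hk, schroderTerm_eq_zero (by omega)]
    ring

theorem schroderTerm_recurrence (m j : ℕ) :
    ((m : ℚ) + 3) * schroderTerm (m + 2) (j + 1) - (2 * m + 3) * schroderTerm (m + 1) (j + 1)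
      + m * schroderTerm m (j + 1) = 2 * (2 * m + 3) * schroderTerm (m + 1) j := by
  -- After multiplying by `(j+1)(j+2)` every term is a polynomial multiple of `t(m+1, j)` through
  -- relations valid for all `n, k`, so the boundary cases `j ≥ m` need no separate treatment.
  have hj : ((j : ℚ) + 1) * (j + 2) ≠ 0 := by positivity
  refine mul_left_cancel₀ hj ?_
  have a2 := schroderTerm_succ_left (m + 1) j
  rw [show m + 1 + 1 = m + 2 from rfl] at a2
  have a1 := schroderTerm_succ_left m j
  have b2 := schroderTerm_succ_right (m + 2) j
  have b1 := schroderTerm_succ_right (m + 1) j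
  have b0 := schroderTerm_succ_right m j
  push_cast at a2 a1 b2 b1 b0
  linear_combination (m + 3 : ℚ) * b2 + ((m : ℚ) + j + 3) * (m + 3) * a2 - (2 * m + 3 : ℚ) * b1
    + m * b0 - m * (m - j : ℚ) * a1

def schroderPoly (σ : ℚ) (n : ℕ) : ℚ := ∑ k ∈ range (n + 1), schroderTerm n k * σ ^ k

theorem schroderPoly_eq_sum_range (σ : ℚ) {n N : ℕ} (h : n < N) :
    schroderPoly σ n = ∑ k ∈ range N, schroderTerm n k * σ ^ k := by
  refine sum_subset (range_subset_range.2 h) fun k _ hk => ?_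
  rw [schroderTerm_eq_zero (by simpa using hk), zero_mul]

theorem schroderPoly_recurrence (σ : ℚ) (m : ℕ) :
    ((m : ℚ) + 3) * schroderPoly σ (m + 2) =
      (1 + 2 * σ) * (2 * m + 3) * schroderPoly σ (m + 1) - m * schroderPoly σ m := by
  have telescoped : ∑ k ∈ range (m + 3), (((m : ℚ) + 3) * schroderTerm (m + 2) k
      - (2 * m + 3) * schroderTerm (m + 1) k + m * schroderTerm m k) * σ ^ k
      = 2 * σ * (2 * m + 3) * schroderPoly σ (m + 1) := by
    rw [sum_range_succ', schroderPoly, mul_sum]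
    simp only [schroderTerm_recurrence, schroderTerm_zero_right]
    exact (add_eq_left.2 (by ring)).trans (sum_congr rfl fun j _ => by ring)
  have hP₁ := schroderPoly_eq_sum_range σ (show m + 1 < m + 3 by omega)
  rw [hP₁] at telescoped
  rw [schroderPoly_eq_sum_range σ (show m + 2 < m + 3 by omega), hP₁,
    schroderPoly_eq_sum_range σ (show m < m + 3 by omega)]
  simp only [add_mul, sub_mul, sum_add_distrib, sum_sub_distrib, mul_assoc, ← mul_sum]
    at telescoped
  linear_combination telescoped

theorem eq_of_linear_recurrence {R : Type*} [CommRing R] [IsDomain R] {p q r a b : ℕ → R}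
    (hp : ∀ m, p m ≠ 0) (ha : ∀ m, p m * a (m + 2) = q m * a (m + 1) + r m * a m)
    (hb : ∀ m, p m * b (m + 2) = q m * b (m + 1) + r m * b m)
    (h0 : a 0 = b 0) (h1 : a 1 = b 1) : a = b := by
  have h : ∀ m, a m = b m ∧ a (m + 1) = b (m + 1) := by
    intro m
    induction m with
    | zero => exact ⟨h0, h1⟩
    | succ m ih => exact ⟨ih.2, mul_left_cancel₀ (hp m) (by rw [ha, hb, ih.1, ih.2])⟩
  exact funext fun m => (h m).1

theorem schroderPoly_one_eq_neg_two {n : ℕ} (hn : 1 ≤ n) :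
    schroderPoly 1 n = 2 * (-1) ^ n * schroderPoly (-2) n := by
  obtain ⟨n, rfl⟩ := Nat.exists_eq_add_of_le' hn
  have h := eq_of_linear_recurrence (p := fun m => (m : ℚ) + 4)
    (q := fun m => 3 * (2 * m + 5)) (r := fun m => -(m + 1))
    (a := fun n => schroderPoly 1 (n + 1))
    (b := fun n => 2 * (-1) ^ (n + 1) * schroderPoly (-2) (n + 1))
    (fun m => by positivity)
    (fun m => by
      have := schroderPoly_recurrence 1 (m + 1)
      push_cast at this
      linear_combination this)
    (fun m => by
      have := schroderPoly_recurrence (-2) (m + 1)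
      push_cast at this
      linear_combination 2 * (-1) ^ (m + 1) * this)
    (by norm_num [schroderPoly, sum_range_succ, schroderTerm])
    (by norm_num [schroderPoly, sum_range_succ, schroderTerm, catalan_two])
  exact congrFun h n

theorem schroderTerm_eq_choose_sub {n k : ℕ} (h : k ≤ n) :
    schroderTerm n k = (n + k).choose (n - k) * catalan k := by
  rw [schroderTerm, Nat.choose_symm_of_eq_add (by omega : n + k = 2 * k + (n - k))]

/-- For n ≥ 1, Σ_{k=0}^{n} C(n+k, n-k)·Cat(k) (the large Schröder number) equals
2·Σ_{k=0}^{n} (-1)^{n+k}·C(n+k, n-k)·Cat(k)·2^k (twice the little Schröder number). -/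
theorem stmt11 (n : ℕ) (hn : 1 ≤ n) :
    (∑ k ∈ Finset.range (n + 1),
        (Nat.choose (n + k) (n - k) : ℤ) * (catalan k : ℤ)) =
    2 * ∑ k ∈ Finset.range (n + 1),
        (-1) ^ (n + k) * (Nat.choose (n + k) (n - k) : ℤ) * (catalan k : ℤ) * 2 ^ k := by
  have large : ∑ k ∈ range (n + 1), ((n + k).choose (n - k) : ℚ) * catalan k =
      schroderPoly 1 n :=
    sum_congr rfl fun k hk => by
      rw [schroderTerm_eq_choose_sub (by simpa [Nat.lt_succ_iff] using hk), one_pow, mul_one]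
  have little : ∑ k ∈ range (n + 1),
      (-1) ^ (n + k) * ((n + k).choose (n - k) : ℚ) * catalan k * 2 ^ k =
        (-1) ^ n * schroderPoly (-2) n := by
    rw [schroderPoly, mul_sum]
    refine sum_congr rfl fun k hk => ?_
    rw [schroderTerm_eq_choose_sub (by simpa [Nat.lt_succ_iff] using hk), neg_pow (2 : ℚ)]
    ring
  qify
  rw [large, little, schroderPoly_one_eq_neg_two hn]
  ring
end

section
/- For n ≥ 1, Σ_{k=1}^{n} C(n+k, k)·C(n−1, k−1)·σ^{k−1}·(1+σ)/(n+1) = Σ_{k=0}^{n} C(n+k, n−k)·Cat(k)·σ^k as polynomials in σ with rational coefficients. -/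
/-!
Multiplying by `1 + σ` makes the coefficient of `σ^k` on the left equal to `c (k+1) + c k`, where
`c k = C(n+k,k)·C(n-1,k-1)/(n+1)`; the boundary terms are `c 1 = 1` and `c (n+1) = 0`. Both
binomial products in `c (k+1) + c k` are rational multiples of `T = C(n+k,k)·C(n,k)`, namely
`(n+k+1)(n-k)/(n(k+1))·T` and `k/n·T`, and since `(n+k+1)(n-k) + k(k+1) = n(n+1)` their sum is
`(n+1)/(k+1)·T = (n+1)·C(n+k,n-k)·Cat(k)`.
-/
open Nat Polynomial Finset

theorem Nat.choose_add_choose_sub_mul_centralBinom (n k : ℕ) (hk : k ≤ n) :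
    (n + k).choose (n - k) * centralBinom k = (n + k).choose k * n.choose k := by
  rw [centralBinom_eq_two_mul_choose, choose_symm_of_eq_add (show n + k = n - k + 2 * k by omega),
    choose_mul (by omega), show n + k - k = n by omega, show 2 * k - k = k by omega]

theorem Nat.mul_choose_sub_one_sub_one (n k : ℕ) (hk : 1 ≤ k) :
    n * (n - 1).choose (k - 1) = k * n.choose k := by
  obtain ⟨j, rfl⟩ : ∃ j, k = j + 1 := ⟨k - 1, by omega⟩
  rcases n with _ | m
  · simp
  simpa [mul_comm] using add_one_mul_choose_eq m j

theorem Nat.mul_choose_sub_one (n k : ℕ) (hn : 1 ≤ n) :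
    n * (n - 1).choose k = (n - k) * n.choose k := by
  obtain ⟨m, rfl⟩ : ∃ m, n = m + 1 := ⟨n - 1, by omega⟩
  simpa [mul_comm] using choose_mul_succ_eq m k

theorem Nat.choose_add_one_mul_choose_add_choose_mul_choose_sub_one (n k : ℕ) (hk : 1 ≤ k)
    (hkn : k ≤ n) :
    (n + k + 1).choose (k + 1) * (n - 1).choose k + (n + k).choose k * (n - 1).choose (k - 1) =
      (n + 1) * ((n + k).choose (n - k) * catalan k) := by
  set T := (n + k).choose k * n.choose k
  have hA : n * (k + 1) * ((n + k + 1).choose (k + 1) * (n - 1).choose k) =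
      (n + k + 1) * (n - k) * T := by
    calc _ = (n + k + 1).choose (k + 1) * (k + 1) * (n * (n - 1).choose k) := by ring
      _ = (n + k + 1) * (n + k).choose k * ((n - k) * n.choose k) := by
        rw [← add_one_mul_choose_eq, mul_choose_sub_one n k (by omega)]
      _ = _ := by ring
  have hB : n * ((n + k).choose k * (n - 1).choose (k - 1)) = k * T := by
    rw [mul_left_comm, mul_choose_sub_one_sub_one n k hk]
    ring
  have hT : T = (k + 1) * ((n + k).choose (n - k) * catalan k) := by
    rw [mul_left_comm, succ_mul_catalan_eq_centralBinom, choose_add_choose_sub_mul_centralBinom n k hkn]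
  apply Nat.eq_of_mul_eq_mul_left (show 0 < n * (k + 1) from Nat.mul_pos (by omega) k.succ_pos)
  zify [hkn] at hA hB hT ⊢
  linear_combination hA + (k + 1) * hB + n * (n + 1) * hT

theorem Finset.sum_Icc_mul_pow_sub_one_mul_one_add {R : Type*} [CommSemiring R] (a : ℕ → R)
    (x : R) (n : ℕ) :
    ∑ k ∈ Icc 1 n, a k * x ^ (k - 1) * (1 + x) + a (n + 1) * x ^ n =
      a 1 + ∑ k ∈ Icc 1 n, (a (k + 1) + a k) * x ^ k := by
  induction n with
  | zero => simp
  | succ n ih =>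
    rw [sum_Icc_succ_top (by omega), sum_Icc_succ_top (by omega), ← add_assoc, ← ih,
      Nat.add_sub_cancel]
    ring

/-- For n ≥ 1, Σ_{k=1}^{n} C(n+k,k)·C(n-1,k-1)·σ^{k-1}·(1+σ)/(n+1)
= Σ_{k=0}^{n} C(n+k,n-k)·Cat(k)·σ^k in ℚ[σ]. -/
theorem stmt12 (n : ℕ) (hn : 1 ≤ n) :
    ∑ k ∈ Finset.Icc 1 n,
        Polynomial.C ((Nat.choose (n + k) k * Nat.choose (n - 1) (k - 1) : ℚ) / ((n : ℚ) + 1)) *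
          Polynomial.X ^ (k - 1) * (1 + Polynomial.X) =
    ∑ k ∈ Finset.range (n + 1),
        Polynomial.C ((Nat.choose (n + k) (n - k) * catalan k : ℚ)) * Polynomial.X ^ k := by
  set c : ℕ → ℚ := fun k => (Nat.choose (n + k) k * Nat.choose (n - 1) (k - 1) : ℚ) / ((n : ℚ) + 1)
  have hc_one : c 1 = 1 := by
    simp only [c, Nat.choose_one_right, Nat.sub_self, Nat.choose_zero_right, Nat.cast_one, mul_one]
    push_cast
    exact div_self n.cast_add_one_ne_zero
  have hc_top : c (n + 1) = 0 := by
    simp [c, Nat.choose_eq_zero_of_lt (show n - 1 < n by omega)]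
  have hc_add (k : ℕ) (hk : k ∈ Icc 1 n) : c (k + 1) + c k = (n + k).choose (n - k) * catalan k := by
    rw [mem_Icc] at hk
    have h := congrArg (Nat.cast : ℕ → ℚ)
      (choose_add_one_mul_choose_add_choose_mul_choose_sub_one n k hk.1 hk.2)
    push_cast at h
    simp only [c, Nat.add_sub_cancel]
    rw [← add_div, ← add_assoc, h, mul_div_cancel_left₀ _ (by positivity)]
  have hshift := sum_Icc_mul_pow_sub_one_mul_one_add (fun k => C (c k)) X n
  simp only [hc_top, hc_one, map_zero, zero_mul, add_zero, map_one] at hshift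
  rw [hshift, range_eq_Ico, sum_eq_sum_Ico_succ_bot (by omega), Ico_add_one_right_eq_Icc]
  congr 1
  · simp
  · exact sum_congr rfl fun k hk => by rw [← C_add, hc_add k hk]
end

section
/- Let f(y) = √(4−y)/(2π√y) for 0 < y < 4. Then for every n ≥ 0, ∫₀⁴ yⁿ·f(y) dy = Cat(n), the n-th Catalan number. -/
/-!
The substitution `y = 4 sin² θ`, `θ ∈ [0, π/2]`, turns the `n`-th moment into
`(4 ^ (n + 1) / π) ∫₀^{π/2} sin^{2n} θ cos² θ dθ`. By Wallis' reduction formula this integral is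
`(π / 2) C(2n, n) / 4 ^ n / (2n + 2)`, and `C(2n, n) / (n + 1) = Cat(n)`.
-/

open Real Set MeasureTheory intervalIntegral

theorem integral_zero_pi_div_two_sin_pow_add_two (k : ℕ) :
    ∫ x in (0:ℝ)..π / 2, sin x ^ (k + 2) = (k + 1) / (k + 2) * ∫ x in (0:ℝ)..π / 2, sin x ^ k := by
  simp [integral_sin_pow]

theorem integral_zero_pi_div_two_sin_pow_two_mul (n : ℕ) :
    ∫ x in (0:ℝ)..π / 2, sin x ^ (2 * n) = π / 2 * n.centralBinom / 4 ^ n := by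
  induction n with
  | zero => simp
  | succ n ih =>
    have hrec : ((n : ℝ) + 1) * (n + 1).centralBinom = 2 * (2 * n + 1) * n.centralBinom := by
      exact_mod_cast Nat.succ_mul_centralBinom_succ n
    rw [mul_add_one, integral_zero_pi_div_two_sin_pow_add_two, ih]
    push_cast
    field_simp
    linear_combination (-2 * 4 ^ n) * hrec

theorem integral_zero_pi_div_two_sin_pow_mul_cos_sq (k : ℕ) :
    ∫ x in (0:ℝ)..π / 2, sin x ^ k * cos x ^ 2 = (∫ x in (0:ℝ)..π / 2, sin x ^ k) / (k + 2) := by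
  have hsplit : ∫ x in (0:ℝ)..π / 2, sin x ^ k * cos x ^ 2 =
      (∫ x in (0:ℝ)..π / 2, sin x ^ k) - ∫ x in (0:ℝ)..π / 2, sin x ^ (k + 2) := by
    rw [← intervalIntegral.integral_sub (by apply Continuous.intervalIntegrable; fun_prop)
      (by apply Continuous.intervalIntegrable; fun_prop)]
    congr 1 with x
    linear_combination sin x ^ k * sin_sq_add_cos_sq x
  rw [hsplit, integral_zero_pi_div_two_sin_pow_add_two]
  field_simp
  ring

theorem four_mul_sin_sq_substitution {n : ℕ} {θ : ℝ} (hs : 0 < sin θ) (hc : 0 ≤ cos θ) :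
    (8 * sin θ * cos θ) • ((4 * sin θ ^ 2) ^ n *
        (√(4 - 4 * sin θ ^ 2) / (2 * π * √(4 * sin θ ^ 2)))) =
      4 ^ (n + 1) / π * (sin θ ^ (2 * n) * cos θ ^ 2) := by
  have hsqrt_sin : √(4 * sin θ ^ 2) = 2 * sin θ := by
    rw [show 4 * sin θ ^ 2 = (2 * sin θ) ^ 2 by ring, sqrt_sq (by positivity)]
  have hsqrt_cos : √(4 - 4 * sin θ ^ 2) = 2 * cos θ := by
    rw [show 4 - 4 * sin θ ^ 2 = (2 * cos θ) ^ 2 by linear_combination -4 * sin_sq_add_cos_sq θ,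
      sqrt_sq (by positivity)]
  rw [hsqrt_sin, hsqrt_cos, smul_eq_mul, mul_pow, pow_mul]
  field_simp
  ring

theorem integral_pow_mul_density_eq_integral_sin_pow_mul_cos_sq (n : ℕ) :
    ∫ y in (0:ℝ)..4, y ^ n * (√(4 - y) / (2 * π * √y)) =
      4 ^ (n + 1) / π * ∫ x in (0:ℝ)..π / 2, sin x ^ (2 * n) * cos x ^ 2 := by
  have hsin_cos_pos : ∀ θ ∈ Ioo 0 (π / 2), 0 < sin θ ∧ 0 < cos θ := fun θ hθ =>
    ⟨sin_pos_of_pos_of_lt_pi hθ.1 (by linarith [hθ.2, pi_pos]),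
      cos_pos_of_mem_Ioo ⟨by linarith [hθ.1, pi_pos], hθ.2⟩⟩
  have hsub := integral_Icc_deriv_smul_of_deriv_nonneg (a := 0) (b := π / 2)
    (f := fun θ => 4 * sin θ ^ 2) (f' := fun θ => 8 * sin θ * cos θ)
    (g := fun y => y ^ n * (√(4 - y) / (2 * π * √y))) (by fun_prop)
    (fun θ _ => (((hasDerivAt_sin θ).fun_pow 2).const_mul 4).congr_deriv (by ring))
    (fun θ hθ => by obtain ⟨hs, hc⟩ := hsin_cos_pos θ hθ; positivity)
    (by positivity)
  simp only [sin_zero, sin_pi_div_two, ne_eq, OfNat.ofNat_ne_zero, not_false_eq_true, zero_pow,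
    mul_zero, one_pow, mul_one] at hsub
  rw [integral_of_le (by norm_num), integral_of_le (by positivity),
    ← MeasureTheory.integral_const_mul, ← integral_Icc_eq_integral_Ioc,
    ← integral_Icc_eq_integral_Ioc, ← hsub, integral_Icc_eq_integral_Ioo,
    integral_Icc_eq_integral_Ioo]
  exact setIntegral_congr_fun measurableSet_Ioo fun θ hθ =>
    four_mul_sin_sq_substitution (hsin_cos_pos θ hθ).1 (hsin_cos_pos θ hθ).2.le

/-- The density f(y) = √(4-y)/(2π√y) on (0,4) has the Catalan numbers as moments:
∫₀⁴ yⁿ f(y) dy = Cat(n). -/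
theorem stmt13 (n : ℕ) :
    ∫ y in (0:ℝ)..4, y ^ n * (Real.sqrt (4 - y) / (2 * Real.pi * Real.sqrt y)) =
      (catalan n : ℝ) := by
  have hcat : ((n : ℝ) + 1) * catalan n = n.centralBinom := by
    exact_mod_cast succ_mul_catalan_eq_centralBinom n
  rw [integral_pow_mul_density_eq_integral_sin_pow_mul_cos_sq,
    integral_zero_pi_div_two_sin_pow_mul_cos_sq, integral_zero_pi_div_two_sin_pow_two_mul]
  push_cast
  field_simp
  linear_combination (-4 * 4 ^ n) * hcat
end

section
/- The exponential generating function of the Catalan numbers satisfies Σ_{n≥0} Cat(n)·xⁿ/n! = e^{2x}·(I₀(2x) − I₁(2x)) for all real x, where I₀ and I₁ are modified Bessel functions of the first kind, I_ν(z) = Σ_{m≥0} (z/2)^{2m+ν}/(m!·(m+ν)!). -/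
/-!
The coefficient of `xⁿ` in the Cauchy product of `e^{2x} = Σ (2x)ᵏ/k!` with
`I_ν(2x) = Σ_m x^{2m+ν}/(m! (m+ν)!)` is `(1/n!) Σ_m C(n,m) C(n-m,m+ν) 2^{n-2m-ν}`.
This sum is the coefficient of `X^{n+ν}` in `(1 + X(X+2))ⁿ = (1+X)^{2n}`, i.e. `C(2n,n+ν)`, so
`e^{2x} I_ν(2x) = Σ C(2n,n+ν) xⁿ/n!`. The theorem is the difference of the cases `ν = 0` and
`ν = 1`, because `Cat(n) = C(2n,n) - C(2n,n+1)`.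
-/

/-- The modified Bessel function of the first kind of integer order ν,
I_ν(z) = Σ_{m≥0} (z/2)^{2m+ν}/(m!·(m+ν)!). -/
noncomputable def besselI (ν : ℕ) (z : ℝ) : ℝ :=
  ∑' m : ℕ, (z / 2) ^ (2 * m + ν) / ((m.factorial : ℝ) * ((m + ν).factorial : ℝ))

open Finset Polynomial Function
open scoped Nat

theorem Nat.choose_two_mul_eq_sum (n ν : ℕ) :
    (2 * n).choose (n + ν) =
      ∑ m ∈ range (n + 1), n.choose m * (n - m).choose (m + ν) * 2 ^ (n - m - (m + ν)) := by
  have hpoly : (X + 1 : ℕ[X]) ^ (2 * n) = (1 + X * (X + C 2)) ^ n := by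
    rw [pow_mul, map_ofNat C 2]; ring
  have hcoeff : ((X + 1 : ℕ[X]) ^ (2 * n)).coeff (n + ν) = (2 * n).choose (n + ν) := by
    rw [coeff_X_add_one_pow, Nat.cast_id]
  rw [← hcoeff, hpoly, add_pow, finsetSum_coeff]
  refine sum_congr rfl fun m hm => ?_
  have hsplit : n + ν = (m + ν) + (n - m) := by have := mem_range.1 hm; omega
  rw [one_pow, one_mul, ← C_eq_natCast, coeff_mul_C, mul_pow, hsplit, coeff_X_pow_mul,
    coeff_X_add_C_pow, Nat.cast_id, Nat.cast_id]
  ring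

theorem catalan_add_choose (n : ℕ) : catalan n + (2 * n).choose (n + 1) = (2 * n).choose n := by
  refine Nat.eq_of_mul_eq_mul_left n.succ_pos ?_
  have hcat := succ_mul_catalan_eq_centralBinom n
  have hchoose := Nat.choose_succ_right_eq (2 * n) n
  rw [Nat.centralBinom_eq_two_mul_choose] at hcat
  rw [show 2 * n - n = n by omega] at hchoose
  linarith

theorem injective_two_mul_add (ν : ℕ) : Injective fun m : ℕ => 2 * m + ν :=
  fun _ _ h => by simp only at h; omega

/-- The terms of the series `besselI ν (2 * x)`, each placed at the exponent of `x` it carries. -/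
noncomputable def besselISeries (ν : ℕ) (x : ℝ) : ℕ → ℝ :=
  extend (fun m => 2 * m + ν) (fun m => x ^ (2 * m + ν) / (m ! * (m + ν)!)) 0

theorem summable_norm_besselISeries (ν : ℕ) (x : ℝ) :
    Summable fun l => ‖besselISeries ν x l‖ := by
  have hnorm : (fun l => ‖besselISeries ν x l‖) =
      extend (fun m => 2 * m + ν) (fun m => |x| ^ (2 * m + ν) / (m ! * (m + ν)!)) 0 := by
    ext l
    rw [besselISeries, apply_extend norm]
    congr 1
    · ext m; simp
    · ext; simp
  rw [hnorm, summable_extend_zero (injective_two_mul_add ν)]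
  refine Summable.of_nonneg_of_le (fun m => by positivity) (fun m => ?_)
    ((Real.summable_pow_div_factorial (x ^ 2)).mul_left (|x| ^ ν))
  have hfac : (1 : ℝ) ≤ (m + ν)! := by exact_mod_cast (m + ν).factorial_pos
  rw [pow_add, pow_mul, sq_abs, mul_div_assoc', mul_comm (|x| ^ ν)]
  gcongr
  exact le_mul_of_one_le_right (by positivity) hfac

theorem tsum_besselISeries (ν : ℕ) (x : ℝ) :
    ∑' l, besselISeries ν x l = besselI ν (2 * x) := by
  rw [besselISeries, tsum_extend_zero (injective_two_mul_add ν), besselI,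
    mul_div_cancel_left₀ x two_ne_zero]

theorem sum_antidiagonal_pow_div_factorial_mul_besselISeries (ν : ℕ) (x : ℝ) (n : ℕ) :
    ∑ p ∈ antidiagonal n, (2 * x) ^ p.1 / p.1 ! * besselISeries ν x p.2 =
      (2 * n).choose (n + ν) * x ^ n / n ! := by
  have hpre : (range (n + 1)).preimage (fun m => 2 * m + ν) (injective_two_mul_add ν).injOn ⊆
      range (n + 1) := fun m hm => by simp only [mem_preimage, mem_range] at hm ⊢; omega
  calc ∑ p ∈ antidiagonal n, (2 * x) ^ p.1 / p.1 ! * besselISeries ν x p.2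
      = ∑ l ∈ range (n + 1), (2 * x) ^ (n - l) / (n - l)! * besselISeries ν x l := by
        rw [← Nat.sum_antidiagonal_swap, Nat.sum_antidiagonal_eq_sum_range_succ_mk]; rfl
    _ = ∑ m ∈ (range (n + 1)).preimage (fun m => 2 * m + ν) (injective_two_mul_add ν).injOn,
          (2 * x) ^ (n - (2 * m + ν)) / (n - (2 * m + ν))! *
            (x ^ (2 * m + ν) / (m ! * (m + ν)!)) := by
        rw [← sum_preimage _ _ (injective_two_mul_add ν).injOn _ fun l _ hl => by
          rw [besselISeries, extend_apply' _ _ _ hl, Pi.zero_apply, mul_zero]]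
        simp only [besselISeries, (injective_two_mul_add ν).extend_apply]
    _ = ∑ m ∈ range (n + 1),
          x ^ n / n ! * (n.choose m * (n - m).choose (m + ν) * 2 ^ (n - m - (m + ν)) : ℕ) := by
        refine (sum_congr rfl fun m hm => ?_).trans (sum_subset hpre fun m _ hm => ?_)
        · simp only [mem_preimage, mem_range] at hm
          have hk : n - (2 * m + ν) = n - m - (m + ν) := by omega
          push_cast
          rw [Nat.cast_choose ℝ (show m ≤ n by omega),
            Nat.cast_choose ℝ (show m + ν ≤ n - m by omega), hk, mul_pow]
          field_simp
          rw [← pow_add]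
          congr 1
          omega
        · simp only [mem_preimage, mem_range] at hm
          rw [Nat.choose_eq_zero_of_lt (n := n - m) (k := m + ν) (by omega), mul_zero, zero_mul,
            Nat.cast_zero, mul_zero]
    _ = (2 * n).choose (n + ν) * x ^ n / n ! := by
        rw [← mul_sum, ← Nat.cast_sum, ← Nat.choose_two_mul_eq_sum]; ring

theorem hasSum_exp_mul_besselI (ν : ℕ) (x : ℝ) :
    HasSum (fun n => ((2 * n).choose (n + ν) : ℝ) * x ^ n / n !)
      (Real.exp (2 * x) * besselI ν (2 * x)) := by
  have hexp : Summable fun k => ‖(2 * x) ^ k / (k ! : ℝ)‖ := by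
    simpa [abs_div] using Real.summable_pow_div_factorial |2 * x|
  have hbessel := summable_norm_besselISeries ν x
  have hcauchy := summable_norm_sum_mul_antidiagonal_of_summable_norm hexp hbessel
  rw [Real.exp_eq_exp_ℝ, NormedSpace.exp_eq_tsum_div, ← tsum_besselISeries,
    tsum_mul_tsum_eq_tsum_sum_antidiagonal_of_summable_norm hexp hbessel]
  simp only [sum_antidiagonal_pow_div_factorial_mul_besselISeries] at hcauchy ⊢
  exact hcauchy.of_norm.hasSum

/-- The egf of the Catalan numbers: Σ_{n≥0} Cat(n)xⁿ/n! = e^{2x}(I₀(2x) - I₁(2x)). -/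
theorem stmt15 (x : ℝ) :
    (∑' n : ℕ, (catalan n : ℝ) * x ^ n / (n.factorial : ℝ)) =
      Real.exp (2 * x) * (besselI 0 (2 * x) - besselI 1 (2 * x)) := by
  rw [mul_sub, ← ((hasSum_exp_mul_besselI 0 x).sub (hasSum_exp_mul_besselI 1 x)).tsum_eq]
  refine tsum_congr fun n => ?_
  rw [add_zero, ← catalan_add_choose n, Nat.cast_add]
  ring
end

section
/- Let σ > 0 and for x < 0 define b_e(x;σ) = 2/(1 − x + √(1 − 2(1+2σ)x + x²)). Then for each fixed x ≤ 0, b_e(x/σ; σ) → (1 − √(1−4x))/(2x) as σ → ∞ (with limit 1 at x = 0). -/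
open Filter

/- Writing `t = x / σ`, the radicand is `1 - 4x - 2t + t²`, so the quantity is a function of `t`
continuous at `t = 0`, where it equals `2 / (1 + √(1 - 4x))`; rationalising the denominator turns
this into the Catalan generating function `(1 - √(1 - 4x)) / (2x)`. -/

lemma continuousAt_two_div_one_sub_add_sqrt (c : ℝ) :
    ContinuousAt (fun t : ℝ => 2 / (1 - t + Real.sqrt (c - 2 * t + t ^ 2))) 0 := by
  refine continuousAt_const.div (by fun_prop) ?_
  have := Real.sqrt_nonneg (c - 2 * 0 + 0 ^ 2)
  linarith

lemma two_div_one_add_sqrt_one_sub_four_mul {x : ℝ} (hx : x ≤ 1 / 4) :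
    2 / (1 + Real.sqrt (1 - 4 * x)) =
      if x = 0 then 1 else (1 - Real.sqrt (1 - 4 * x)) / (2 * x) := by
  split_ifs with hx0
  · norm_num [hx0]
  have hsq : Real.sqrt (1 - 4 * x) ^ 2 = 1 - 4 * x := Real.sq_sqrt (by linarith)
  have hpos : 0 < 1 + Real.sqrt (1 - 4 * x) := by positivity
  rw [div_eq_div_iff hpos.ne' (mul_ne_zero two_ne_zero hx0)]
  linear_combination hsq

/-- Heavy-traffic limit: for fixed x ≤ 0,
b_e(x/σ; σ) = 2/(1 - x/σ + √(1 - 2(1+2σ)(x/σ) + (x/σ)²)) → (1-√(1-4x))/(2x)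
(the Catalan generating function, with value 1 at x = 0) as σ → ∞. -/
theorem stmt19 (x : ℝ) (hx : x ≤ 0) :
    Tendsto (fun σ : ℝ =>
        2 / (1 - x / σ + Real.sqrt (1 - 2 * (1 + 2 * σ) * (x / σ) + (x / σ) ^ 2)))
      atTop
      (nhds (if x = 0 then 1 else (1 - Real.sqrt (1 - 4 * x)) / (2 * x))) := by
  have hxσ : Tendsto (fun σ : ℝ => x / σ) atTop (nhds 0) :=
    tendsto_const_nhds.div_atTop tendsto_id
  have hlim := (continuousAt_two_div_one_sub_add_sqrt (1 - 4 * x)).tendsto.comp hxσ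
  rw [← two_div_one_add_sqrt_one_sub_four_mul (by linarith)]
  convert hlim.congr' ?_ using 2
  · norm_num
  filter_upwards [eventually_ne_atTop 0] with σ hσ
  simp only [Function.comp_apply]
  congr 3
  field_simp
  ring
end
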